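/- arXiv:math/0508208 — 3 statements merged into one kernel-verified Lean document; each statement's English description precedes it below -/
import Mathlib

section
/- The function f defined for x > 0 by f(x) = (coth(2x))^3 · (1 + 0.91/cosh(2x)) is strictly decreasing on (0, ∞). -/
lemma coth_lt_coth {u v : ℝ} (hu : 0 < u) (huv : u < v) :
    Real.cosh v / Real.sinh v < Real.cosh u / Real.sinh u := by
  have hsu : 0 < Real.sinh u := Real.sinh_pos_iff.2 hu
  have hsv : 0 < Real.sinh v := Real.sinh_pos_iff.2 (hu.trans huv)
  rw [div_lt_div_iff₀ hsv hsu]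
  have h : 0 < Real.sinh (v - u) := Real.sinh_pos_iff.2 (by linarith)
  rw [Real.sinh_sub] at h
  nlinarith

theorem f_strictAnti :
    StrictAntiOn
      (fun x : ℝ => (Real.cosh (2 * x) / Real.sinh (2 * x)) ^ 3 *
        (1 + 0.91 / Real.cosh (2 * x)))
      (Set.Ioi (0 : ℝ)) := by
  intro x hx y hy hxy
  simp only [Set.mem_Ioi] at hx hy
  have h2x : (0:ℝ) < 2 * x := by linarith
  have h2xy : 2 * x < 2 * y := by linarith
  have hcoth := coth_lt_coth h2x h2xy
  have hcy : 0 < Real.cosh (2 * y) := (Real.cosh_pos _)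
  have hcx : 0 < Real.cosh (2 * x) := (Real.cosh_pos _)
  have hsy : 0 < Real.sinh (2 * y) := Real.sinh_pos_iff.2 (by linarith)
  have hcothy : 0 < Real.cosh (2 * y) / Real.sinh (2 * y) := div_pos hcy hsy
  have hpow : (Real.cosh (2 * y) / Real.sinh (2 * y)) ^ 3 <
      (Real.cosh (2 * x) / Real.sinh (2 * x)) ^ 3 :=
    pow_lt_pow_left₀ hcoth hcothy.le (by norm_num)
  have hcc : Real.cosh (2 * x) < Real.cosh (2 * y) :=
    Real.cosh_lt_cosh.2 (by rw [abs_of_pos h2x, abs_of_pos (by linarith)]; linarith)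
  have hB : 0.91 / Real.cosh (2 * y) < 0.91 / Real.cosh (2 * x) :=
    div_lt_div_of_pos_left (by norm_num) hcx hcc
  have hBy : (0:ℝ) < 1 + 0.91 / Real.cosh (2 * y) := by positivity
  dsimp only
  exact mul_lt_mul hpow (by linarith) hBy (by positivity)
end

section
/- For every real x ≥ (log 3)/2, (coth(2x))^3 · (1 + 0.90817/cosh(2x)) < 3.0174. -/
theorem f1_bound (x : ℝ) (hx : Real.log 3 / 2 ≤ x) :
    (Real.cosh (2 * x) / Real.sinh (2 * x)) ^ 3 *
      (1 + 0.90817 / Real.cosh (2 * x)) < 3.0174 := by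
  set t := 2 * x with htdef
  have ht : Real.log 3 ≤ t := by
    have := mul_le_mul_of_nonneg_left hx (by norm_num : (0:ℝ) ≤ 2)
    linarith [this]
  have hlog3 : (0:ℝ) < Real.log 3 := Real.log_pos (by norm_num)
  have ht0 : 0 < t := lt_of_lt_of_le hlog3 ht
  have hs : 0 < Real.sinh t := Real.sinh_pos_iff.mpr ht0
  have hc : 0 < Real.cosh t := Real.cosh_pos t
  have hexp : (3:ℝ) ≤ Real.exp t := by
    calc (3:ℝ) = Real.exp (Real.log 3) := (Real.exp_log (by norm_num)).symm
    _ ≤ Real.exp t := Real.exp_le_exp.mpr ht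
  have hexpneg : Real.exp (-t) ≤ 1/3 := by
    rw [Real.exp_neg]
    rw [inv_le_comm₀ (by positivity) (by norm_num)]
    simpa using hexp
  -- cosh t ≥ 5/3
  have hcosh : (5:ℝ)/3 ≤ Real.cosh t := by
    rw [Real.cosh_eq]
    have h1 : Real.exp (-t) * Real.exp t = 1 := by
      rw [← Real.exp_add]; simp
    nlinarith [Real.exp_pos t, Real.exp_pos (-t),
      mul_nonneg (sub_nonneg.mpr hexp) (by linarith [Real.exp_pos t] : (0:ℝ) ≤ Real.exp t - 1/3)]
  -- 4 cosh ≤ 5 sinh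
  have hcoth : 4 * Real.cosh t ≤ 5 * Real.sinh t := by
    rw [Real.cosh_eq, Real.sinh_eq]
    have h1 : Real.exp (-t) * Real.exp t = 1 := by
      rw [← Real.exp_add]; simp
    nlinarith [Real.exp_pos t, Real.exp_pos (-t)]
  have hdiv : Real.cosh t / Real.sinh t ≤ 5/4 := by
    rw [div_le_div_iff₀ hs (by norm_num)]
    linarith
  have hdivpos : 0 ≤ Real.cosh t / Real.sinh t := le_of_lt (div_pos hc hs)
  have hfrac : 0.90817 / Real.cosh t ≤ 0.90817 * (3/5) := by
    rw [div_le_iff₀ hc]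
    nlinarith
  calc (Real.cosh t / Real.sinh t) ^ 3 * (1 + 0.90817 / Real.cosh t)
      ≤ (5/4)^3 * (1 + 0.90817 * (3/5)) := by
        apply mul_le_mul
        · exact pow_le_pow_left₀ hdivpos hdiv 3
        · linarith
        · positivity
        · positivity
    _ < 3.0174 := by norm_num
end

section
/- The function g defined for x > 0 by g(x) = arcsin(1/(2 cosh x)) / arsinh(tanh(x)/√3) is strictly decreasing on (0, ∞). -/
open Real

lemma tanh_lt_tanh_of_lt {x y : ℝ} (h : x < y) : Real.tanh x < Real.tanh y := by
  rw [Real.tanh_eq_sinh_div_cosh, Real.tanh_eq_sinh_div_cosh,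
    div_lt_div_iff₀ (Real.cosh_pos x) (Real.cosh_pos y)]
  have h1 : Real.sinh (x - y) < 0 := Real.sinh_neg_iff.2 (by linarith)
  nlinarith [Real.sinh_sub x y, h1]

theorem g_strictAnti :
    StrictAntiOn
      (fun x : ℝ => Real.arcsin (1 / (2 * Real.cosh x)) /
        Real.arsinh (Real.tanh x / Real.sqrt 3))
      (Set.Ioi (0 : ℝ)) := by
  intro x hx y hy hxy
  simp only [Set.mem_Ioi] at hx hy
  have s3 : (0:ℝ) < Real.sqrt 3 := by positivity
  -- numerator facts
  have hcx : (1:ℝ) ≤ Real.cosh x := Real.one_le_cosh x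
  have hcy : (1:ℝ) ≤ Real.cosh y := Real.one_le_cosh y
  have hclt : Real.cosh x < Real.cosh y := by
    rw [Real.cosh_lt_cosh, abs_of_pos hx, abs_of_pos hy]; exact hxy
  have hargx : 1 / (2 * Real.cosh x) ≤ 1 := by
    rw [div_le_one (by linarith)]; linarith
  have hargy0 : 0 < 1 / (2 * Real.cosh y) := by positivity
  have harglt : 1 / (2 * Real.cosh y) < 1 / (2 * Real.cosh x) := by
    apply div_lt_div_of_pos_left one_pos (by linarith) (by linarith)
  have hN : Real.arcsin (1 / (2 * Real.cosh y)) < Real.arcsin (1 / (2 * Real.cosh x)) :=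
    Real.strictMonoOn_arcsin ⟨by linarith, by linarith⟩ ⟨by linarith, hargx⟩ harglt
  have hNy : 0 < Real.arcsin (1 / (2 * Real.cosh y)) := Real.arcsin_pos.2 hargy0
  -- denominator facts
  have htx : 0 < Real.tanh x := by
    have := tanh_lt_tanh_of_lt hx
    simpa [Real.tanh_zero] using this
  have htlt : Real.tanh x < Real.tanh y := tanh_lt_tanh_of_lt hxy
  have hDx : 0 < Real.arsinh (Real.tanh x / Real.sqrt 3) :=
    Real.arsinh_pos_iff.2 (by positivity)
  have hD : Real.arsinh (Real.tanh x / Real.sqrt 3) <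
      Real.arsinh (Real.tanh y / Real.sqrt 3) :=
    Real.arsinh_lt_arsinh.2 (by apply div_lt_div_of_pos_right htlt s3)
  have hDy : 0 < Real.arsinh (Real.tanh y / Real.sqrt 3) := lt_trans hDx hD
  have hNx : 0 < Real.arcsin (1 / (2 * Real.cosh x)) := lt_trans hNy hN
  calc Real.arcsin (1 / (2 * Real.cosh y)) / Real.arsinh (Real.tanh y / Real.sqrt 3)
      < Real.arcsin (1 / (2 * Real.cosh x)) / Real.arsinh (Real.tanh y / Real.sqrt 3) := by
        exact (div_lt_div_iff_of_pos_right hDy).2 hN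
    _ < Real.arcsin (1 / (2 * Real.cosh x)) / Real.arsinh (Real.tanh x / Real.sqrt 3) :=
        div_lt_div_of_pos_left hNx hDx hD
end
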